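/- The triangle T2 with vertices W1, W2, W3 is a solution of the Cramer–Castillon problem for the triangle ABC and its incircle: W1, W2 and W3 all lie on the incircle (dist(I,W1) = dist(I,W2) = dist(I,W3) = r), and the sides pass cyclically through the vertices of ABC, namely A lies on the line through W1 and W2, B lies on the line through W2 and W3, and C lies on the line through W3 and W1. -/

import Mathlib

open EuclideanGeometry

/-!
Write `u, v, w` for the tangent lengths `s - a, s - b, s - c`, so that `a = v + w`,
`b = u + w`, `c = u + v` and `I = [v + w : u + w : u + v]`. For `p + q + t = 0` the
barycentric distance formula gives `|I P|² = u v w / (u + v + w)` for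
`P = [p²/u : q²/v : t²/w]`, and this is also the squared distance from `I` to the nearest point
of `BC`; so all such points lie on the incircle. The vertices of `T2` are of this form, with
`(p, q, t) = (1, φ, -(φ + 1)), (2φ + 1, -φ, -(φ + 1)), (2φ + 1, -(3φ + 2), φ + 1)`.

`W1` and `W2` differ only in their `A`-coordinate, hence are collinear with `A`; likewise `W2`,
`W3` and `B`. Finally `3φ + 2 = φ (2φ + 1)`, so `W3` is `W1` with its `A`- and `B`-coordinates
scaled by `(2φ + 1)²`, which makes `W3`, `W1`, `C` collinear. The golden ratio enters only in
this last step.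
-/

/-- The point with barycentric coordinates `[x : y : z]` with respect to `(A, B, C)`. -/
noncomputable def bary (A B C : EuclideanSpace ℝ (Fin 2)) (x y z : ℝ) :
    EuclideanSpace ℝ (Fin 2) :=
  (x + y + z)⁻¹ • (x • A + y • B + z • C)

theorem norm_smul_add_smul_add_smul_sq {V : Type*} [NormedAddCommGroup V]
    [InnerProductSpace ℝ V] (A B C : V) {d₁ d₂ d₃ : ℝ} (h : d₁ + d₂ + d₃ = 0) :
    ‖d₁ • A + d₂ • B + d₃ • C‖ ^ 2 =
      -(d₂ * d₃ * dist B C ^ 2 + d₃ * d₁ * dist C A ^ 2 + d₁ * d₂ * dist A B ^ 2) := by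
  have hd₁ : d₁ = -d₂ - d₃ := by linarith
  have hv : d₁ • A + d₂ • B + d₃ • C = d₂ • (B - A) + d₃ • (C - A) := by
    rw [hd₁]; module
  have hBC : dist B C ^ 2 = ‖B - A‖ ^ 2 - 2 * inner ℝ (B - A) (C - A) + ‖C - A‖ ^ 2 := by
    rw [← norm_sub_sq_real, sub_sub_sub_cancel_right, dist_eq_norm]
  rw [hv, norm_add_sq_real, norm_smul, norm_smul, real_inner_smul_left, real_inner_smul_right,
    hBC, dist_comm A B, dist_eq_norm, dist_eq_norm, Real.norm_eq_abs, Real.norm_eq_abs, mul_pow,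
    mul_pow, sq_abs, sq_abs, hd₁]
  ring

theorem dist_lt_dist_add_dist_of_not_collinear {V P : Type*} [NormedAddCommGroup V]
    [NormedSpace ℝ V] [StrictConvexSpace ℝ V] [MetricSpace P] [NormedAddTorsor V P] {A B C : P}
    (h : ¬ Collinear ℝ {A, B, C}) : dist B C < dist A B + dist C A := by
  rw [dist_comm A B, dist_comm C A]
  exact dist_lt_dist_add_dist_iff.2 fun hBAC ↦ h (by simpa [Set.insert_comm] using hBAC.collinear)

theorem triangle_inequalities_of_affineIndependent {A B C : EuclideanSpace ℝ (Fin 2)}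
    (h : AffineIndependent ℝ ![A, B, C]) :
    dist B C < dist A B + dist C A ∧ dist C A < dist B C + dist A B ∧
      dist A B < dist C A + dist B C := by
  rw [affineIndependent_iff_not_collinear_set] at h
  refine ⟨dist_lt_dist_add_dist_of_not_collinear h, dist_lt_dist_add_dist_of_not_collinear ?_,
    dist_lt_dist_add_dist_of_not_collinear ?_⟩
  · rwa [Set.pair_comm C A, Set.insert_comm B A]
  · rwa [Set.insert_comm C A, Set.pair_comm C B]

section Barycentric

variable (A B C : EuclideanSpace ℝ (Fin 2))

theorem bary_sub_bary (x y z x' y' z' : ℝ) :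
    bary A B C x y z - bary A B C x' y' z' =
      (x / (x + y + z) - x' / (x' + y' + z')) • A + (y / (x + y + z) - y' / (x' + y' + z')) • B
        + (z / (x + y + z) - z' / (x' + y' + z')) • C := by
  simp only [bary, div_eq_inv_mul, sub_smul, mul_smul, smul_add]
  abel

theorem dist_bary_bary_sq {x y z x' y' z' : ℝ} (h : x + y + z ≠ 0) (h' : x' + y' + z' ≠ 0) :
    dist (bary A B C x y z) (bary A B C x' y' z') ^ 2 =
      -((y / (x + y + z) - y' / (x' + y' + z')) * (z / (x + y + z) - z' / (x' + y' + z'))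
            * dist B C ^ 2
        + (z / (x + y + z) - z' / (x' + y' + z')) * (x / (x + y + z) - x' / (x' + y' + z'))
            * dist C A ^ 2
        + (x / (x + y + z) - x' / (x' + y' + z')) * (y / (x + y + z) - y' / (x' + y' + z'))
            * dist A B ^ 2) := by
  rw [dist_eq_norm, bary_sub_bary]
  refine norm_smul_add_smul_add_smul_sq A B C ?_
  field_simp
  ring

theorem bary_rotate (x y z : ℝ) : bary A B C x y z = bary B C A y z x := by
  rw [bary, bary, show y + z + x = x + y + z by ring,
    show y • B + z • C + x • A = x • A + y • B + z • C by abel]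

theorem bary_smul {k : ℝ} (hk : k ≠ 0) (x y z : ℝ) :
    bary A B C (k * x) (k * y) (k * z) = bary A B C x y z := by
  rw [bary, bary, show (k * x) • A + (k * y) • B + (k * z) • C = k • (x • A + y • B + z • C) by
    module, smul_smul, ← mul_add, ← mul_add, mul_inv_rev, mul_assoc, inv_mul_cancel₀ hk, mul_one]

theorem lineMap_eq_bary (τ : ℝ) : AffineMap.lineMap B C τ = bary A B C 0 (1 - τ) τ := by
  rw [AffineMap.lineMap_apply_module, bary, zero_add, sub_add_cancel, inv_one, one_smul,
    zero_smul, zero_add]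

theorem left_mem_affineSpan_bary_bary {x x' y z : ℝ} (hx : x ≠ x') (h : x + y + z ≠ 0)
    (h' : x' + y + z ≠ 0) : A ∈ line[ℝ, bary A B C x y z, bary A B C x' y z] := by
  have hA : AffineMap.lineMap (k := ℝ) (bary A B C x' y z) (bary A B C x y z)
      ((x + y + z) / (x - x')) = A := by
    have hxx : x - x' ≠ 0 := sub_ne_zero.2 hx
    ext i
    simp only [AffineMap.lineMap_apply, bary, vsub_eq_sub, vadd_eq_add, PiLp.add_apply,
      PiLp.sub_apply, PiLp.smul_apply, smul_eq_mul]
    field_simp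
    ring
  simpa only [hA] using AffineMap.lineMap_rev_mem_affineSpan_pair (k := ℝ)
    ((x + y + z) / (x - x')) (bary A B C x y z) (bary A B C x' y z)

theorem mem_affineSpan_bary_smul_bary {k x y z : ℝ} (hk₀ : k ≠ 0) (hk₁ : k ≠ 1) (hz : z ≠ 0)
    (h : k * x + k * y + z ≠ 0) (h' : x + y + z ≠ 0) :
    C ∈ line[ℝ, bary A B C (k * x) (k * y) z, bary A B C x y z] := by
  obtain ⟨z, rfl⟩ : ∃ z', z = k * z' := ⟨k⁻¹ * z, by field_simp⟩
  rw [bary_smul A B C hk₀, bary_rotate, bary_rotate B, bary_rotate A, bary_rotate B]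
  refine left_mem_affineSpan_bary_bary C A B ?_ ?_ ?_
  · contrapose! hk₁
    exact (mul_eq_right₀ (right_ne_zero_of_mul hz)).1 hk₁.symm
  · contrapose! h
    linear_combination k * h
  · contrapose! h'
    linarith

variable {A B C} {u v w : ℝ}

theorem dist_bary_lineMap_sq (hBC : dist B C = v + w) (hCA : dist C A = u + w)
    (hAB : dist A B = u + v) (h : u + v + w ≠ 0) (τ : ℝ) :
    dist (bary A B C (v + w) (u + w) (u + v)) (AffineMap.lineMap B C τ) ^ 2 =
      u * v * w / (u + v + w) + ((v + w) * τ - v) ^ 2 := by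
  have h₂ : v + w + (u + w) + (u + v) ≠ 0 := by contrapose! h; linarith
  rw [lineMap_eq_bary A, dist_bary_bary_sq A B C h₂ (by norm_num), hBC, hCA, hAB]
  field_simp
  ring

theorem infDist_bary_affineSpan_pair (hBC : dist B C = v + w) (hCA : dist C A = u + w)
    (hAB : dist A B = u + v) (hu : 0 < u) (hv : 0 < v) (hw : 0 < w) :
    Metric.infDist (bary A B C (v + w) (u + w) (u + v)) (line[ℝ, B, C] : Set _) =
      √(u * v * w / (u + v + w)) := by
  have hdist (τ : ℝ) := dist_bary_lineMap_sq hBC hCA hAB (by positivity) τ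
  refine le_antisymm ?_ ((Metric.le_infDist ⟨B, left_mem_affineSpan_pair ℝ B C⟩).2 ?_)
  · -- the incircle touches `BC` at distance `v` from `B`
    have hfoot := hdist (v / (v + w))
    rw [show (v + w) * (v / (v + w)) - v = 0 by field_simp; ring, zero_pow two_ne_zero,
      add_zero] at hfoot
    rw [← hfoot, Real.sqrt_sq dist_nonneg]
    exact Metric.infDist_le_dist_of_mem (AffineMap.lineMap_mem_affineSpan_pair _ _ _)
  · intro y hy
    obtain ⟨τ, rfl⟩ := mem_affineSpan_pair_iff_exists_lineMap_eq.1 hy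
    rw [← Real.sqrt_sq dist_nonneg, hdist]
    exact Real.sqrt_le_sqrt (le_add_of_nonneg_right (sq_nonneg _))

theorem dist_bary_sq_of_add_eq_zero (hBC : dist B C = v + w) (hCA : dist C A = u + w)
    (hAB : dist A B = u + v) (hu : 0 < u) (hv : 0 < v) (hw : 0 < w) {p q t : ℝ}
    (hpqt : p + q + t = 0) (hp : p ≠ 0) :
    dist (bary A B C (v + w) (u + w) (u + v)) (bary A B C (p ^ 2 / u) (q ^ 2 / v) (t ^ 2 / w))
      ^ 2 = u * v * w / (u + v + w) := by
  have h₂ : v + w + (u + w) + (u + v) ≠ 0 := by positivity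
  have hN : p ^ 2 / u + q ^ 2 / v + t ^ 2 / w ≠ 0 := by positivity
  rw [show t = -p - q by linarith] at hN ⊢
  rw [dist_bary_bary_sq A B C h₂ hN, hBC, hCA, hAB]
  field_simp
  ring

theorem dist_bary_eq_infDist_of_add_eq_zero (hBC : dist B C = v + w) (hCA : dist C A = u + w)
    (hAB : dist A B = u + v) (hu : 0 < u) (hv : 0 < v) (hw : 0 < w) {p q t : ℝ}
    (hpqt : p + q + t = 0) (hp : p ≠ 0) :
    dist (bary A B C (v + w) (u + w) (u + v)) (bary A B C (p ^ 2 / u) (q ^ 2 / v) (t ^ 2 / w)) =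
      Metric.infDist (bary A B C (v + w) (u + w) (u + v)) (line[ℝ, B, C] : Set _) := by
  rw [infDist_bary_affineSpan_pair hBC hCA hAB hu hv hw,
    ← dist_bary_sq_of_add_eq_zero hBC hCA hAB hu hv hw hpqt hp, Real.sqrt_sq dist_nonneg]

end Barycentric

/-- The triangle `T2 = (W1, W2, W3)` is a solution of the Cramer–Castillon problem for the
triangle `ABC` and its incircle: its vertices lie on the incircle and its sides pass
cyclically through `A`, `B`, `C`. -/
theorem ccp_incircle_second_solution
    (A B C : EuclideanSpace ℝ (Fin 2)) (hABC : AffineIndependent ℝ ![A, B, C])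
    (a b c s u v w φ : ℝ)
    (ha : a = dist B C) (hb : b = dist C A) (hc : c = dist A B)
    (hs : s = (a + b + c) / 2)
    (hu : u = s - a) (hv : v = s - b) (hw : w = s - c)
    (hφ : φ = (1 + Real.sqrt 5) / 2)
    (I : EuclideanSpace ℝ (Fin 2)) (hI : I = bary A B C a b c)
    (r : ℝ) (hr : r = Metric.infDist I (affineSpan ℝ {B, C} : Set (EuclideanSpace ℝ (Fin 2))))
    (W1 W2 W3 : EuclideanSpace ℝ (Fin 2))
    (hW1 : W1 = bary A B C (1 / u) (φ ^ 2 / v) ((φ + 1) ^ 2 / w))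
    (hW2 : W2 = bary A B C ((2 * φ + 1) ^ 2 / u) (φ ^ 2 / v) ((φ + 1) ^ 2 / w))
    (hW3 : W3 = bary A B C ((2 * φ + 1) ^ 2 / u) ((3 * φ + 2) ^ 2 / v) ((φ + 1) ^ 2 / w)) :
    dist I W1 = r ∧ dist I W2 = r ∧ dist I W3 = r ∧
    A ∈ affineSpan ℝ ({W1, W2} : Set (EuclideanSpace ℝ (Fin 2))) ∧
    B ∈ affineSpan ℝ ({W2, W3} : Set (EuclideanSpace ℝ (Fin 2))) ∧
    C ∈ affineSpan ℝ ({W3, W1} : Set (EuclideanSpace ℝ (Fin 2))) := by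
  obtain ⟨hA, hB, hC⟩ := triangle_inequalities_of_affineIndependent hABC
  have hu₀ : 0 < u := by linarith
  have hv₀ : 0 < v := by linarith
  have hw₀ : 0 < w := by linarith
  have hBC : dist B C = v + w := by linarith
  have hCA : dist C A = u + w := by linarith
  have hAB : dist A B = u + v := by linarith
  have on_incircle {p q t : ℝ} (hpqt : p + q + t = 0) (hp : p ≠ 0) :
      dist I (bary A B C (p ^ 2 / u) (q ^ 2 / v) (t ^ 2 / w)) = r := by
    rw [hr, hI, ha, hb, hc, hBC, hCA, hAB]
    exact dist_bary_eq_infDist_of_add_eq_zero hBC hCA hAB hu₀ hv₀ hw₀ hpqt hp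
  have hφ₀ : 0 < φ := by rw [hφ]; exact Real.goldenRatio_pos
  have hk : 3 * φ + 2 = (2 * φ + 1) * φ := by
    rw [hφ]; linear_combination -2 * Real.goldenRatio_sq
  have hk₁ : (2 * φ + 1) ^ 2 ≠ 1 := by nlinarith
  refine ⟨?_, ?_, ?_, ?_, ?_, ?_⟩
  · simpa only [one_pow, neg_sq, ← hW1] using on_incircle (p := 1) (q := φ) (t := -(φ + 1))
      (by ring) one_ne_zero
  · simpa only [neg_sq, ← hW2] using on_incircle (p := 2 * φ + 1) (q := -φ) (t := -(φ + 1))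
      (by ring) (by positivity)
  · simpa only [neg_sq, ← hW3] using on_incircle (p := 2 * φ + 1) (q := -(3 * φ + 2))
      (t := φ + 1) (by ring) (by positivity)
  · rw [hW1, hW2]
    exact left_mem_affineSpan_bary_bary A B C ((div_left_inj' hu₀.ne').not.2 hk₁.symm)
      (by positivity) (by positivity)
  · rw [hW2, hW3, bary_rotate A, bary_rotate A]
    exact left_mem_affineSpan_bary_bary B C A ((div_left_inj' hv₀.ne').not.2 (by nlinarith))
      (by positivity) (by positivity)
  · rw [hW3, hW1, hk, mul_pow, mul_div_assoc, ← mul_one_div ((2 * φ + 1) ^ 2 : ℝ) u]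
    exact mem_affineSpan_bary_smul_bary A B C (by positivity) hk₁ (by positivity)
      (by positivity) (by positivity)
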